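/- arXiv:2507.07528 — 5 statements merged into one kernel-verified Lean document; each statement's English description precedes it below -/
import Mathlib

section
/- Let φ = C_1 ∧ … ∧ C_m be a 3-CNF formula over variables x_1,…,x_n, let D_φ be the directed hypergraph constructed from φ, and let 𝒫_φ = { {s, x_i, x̄_i, t} : 1 ≤ i ≤ n }. Then φ has a satisfying assignment if and only if D_φ has an induced s-t hyperpath that is not a member of 𝒫_φ. -/
/-- B-connection from a vertex `src` in a directed hypergraph with hyperarc set `𝒜`:
`src` is B-connected from `src`, and if all tails of a hyperarc are B-connected from `src`,
then every head of that hyperarc is B-connected from `src`. -/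
inductive BConn {V : Type*} (𝒜 : Set (Set V × Set V)) (src : V) : V → Prop
  | base : BConn 𝒜 src src
  | step (A : Set V × Set V) (hA : A ∈ 𝒜)
      (hT : ∀ u ∈ A.1, BConn 𝒜 src u) {v : V} (hv : v ∈ A.2) : BConn 𝒜 src v

/-- Hyperarcs of the induced subhypergraph `D[U]`. -/
def inducedArcs {V : Type*} (𝒜 : Set (Set V × Set V)) (U : Set V) :
    Set (Set V × Set V) :=
  {A ∈ 𝒜 | A.1 ⊆ U ∧ A.2 ⊆ U}

/-- `P` is an induced `src`-`tgt` hyperpath: `tgt` is B-connected from `src` in `D[P]`,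
and `P` is inclusion-wise minimal with this property. -/
def IsInducedSTPath {V : Type*} (𝒜 : Set (Set V × Set V)) (src tgt : V) (P : Set V) : Prop :=
  BConn (inducedArcs 𝒜 P) src tgt ∧
    ∀ Q, Q ⊂ P → ¬ BConn (inducedArcs 𝒜 Q) src tgt

/-- Vertices of the directed hypergraph `D_φ` built from a 3-CNF formula with
`n` variables and `m` clauses. -/
inductive PVtx (n m : ℕ) : Type
  | s : PVtx n m
  | t : PVtx n m
  | pos : Fin n → PVtx n m      -- the vertex `x_i`
  | neg : Fin n → PVtx n m      -- the vertex `x̄_i`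
  | cls : Fin m → PVtx n m      -- the vertex `c_j`

/-- A 3-CNF formula with `n` variables and `m` clauses: clause `j` consists of three
literals, a literal being a variable index together with a sign (`true` = positive). -/
abbrev CNF3 (n m : ℕ) := Fin m → Fin 3 → Fin n × Bool

/-- `α` satisfies the 3-CNF formula `φ`. -/
def Satisfies {n m : ℕ} (α : Fin n → Bool) (φ : CNF3 n m) : Prop :=
  ∀ j : Fin m, ∃ k : Fin 3, α (φ j k).1 = (φ j k).2

/-- The vertex of `D_φ` corresponding to a literal. -/
def litVtx {n m : ℕ} (ℓ : Fin n × Bool) : PVtx n m :=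
  cond ℓ.2 (PVtx.pos ℓ.1) (PVtx.neg ℓ.1)

/-- The hyperarcs of the directed hypergraph `D_φ`. -/
def Dphi {n m : ℕ} (φ : CNF3 n m) : Set (Set (PVtx n m) × Set (PVtx n m)) :=
  {A | (∃ i : Fin n, A = ({PVtx.pos i, PVtx.neg i}, {PVtx.t}))
     ∨ (∃ i : Fin n, A = ({PVtx.s}, {PVtx.pos i}))
     ∨ (∃ i : Fin n, A = ({PVtx.s}, {PVtx.neg i}))
     ∨ (∃ j : Fin m, ∃ k : Fin 3, A = ({litVtx (φ j k)}, {PVtx.cls j}))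
     ∨ A = ({v | ∃ j : Fin m, v = PVtx.cls j}, {PVtx.t})}


section Helpers

variable {n m : ℕ}

/-- An equivalence to show `PVtx` is finite. -/
def pvtxEquiv : PVtx n m ≃ (Bool ⊕ Fin n ⊕ Fin n ⊕ Fin m) where
  toFun v := match v with
    | PVtx.s => Sum.inl true
    | PVtx.t => Sum.inl false
    | PVtx.pos i => Sum.inr (Sum.inl i)
    | PVtx.neg i => Sum.inr (Sum.inr (Sum.inl i))
    | PVtx.cls j => Sum.inr (Sum.inr (Sum.inr j))
  invFun x := match x with
    | Sum.inl true => PVtx.s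
    | Sum.inl false => PVtx.t
    | Sum.inr (Sum.inl i) => PVtx.pos i
    | Sum.inr (Sum.inr (Sum.inl i)) => PVtx.neg i
    | Sum.inr (Sum.inr (Sum.inr j)) => PVtx.cls j
  left_inv v := by cases v <;> rfl
  right_inv x := by rcases x with (_|_) | (_ | (_|_)) <;> simp

instance : Finite (PVtx n m) := Finite.of_equiv _ pvtxEquiv.symm

lemma bconnPos (φ : CNF3 n m) (P : Set (PVtx n m)) (i : Fin n)
    (hs : PVtx.s ∈ P) (hp : PVtx.pos i ∈ P) :
    BConn (inducedArcs (Dphi φ) P) PVtx.s (PVtx.pos i) := by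
  have hmem : (({PVtx.s}, {PVtx.pos i}) : Set (PVtx n m) × Set (PVtx n m)) ∈
      inducedArcs (Dphi φ) P :=
    ⟨Or.inr (Or.inl ⟨i, rfl⟩), Set.singleton_subset_iff.mpr hs,
      Set.singleton_subset_iff.mpr hp⟩
  refine BConn.step _ hmem ?_ rfl
  rintro u hu
  rw [Set.mem_singleton_iff] at hu
  exact hu ▸ BConn.base

lemma bconnNeg (φ : CNF3 n m) (P : Set (PVtx n m)) (i : Fin n)
    (hs : PVtx.s ∈ P) (hp : PVtx.neg i ∈ P) :
    BConn (inducedArcs (Dphi φ) P) PVtx.s (PVtx.neg i) := by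
  have hmem : (({PVtx.s}, {PVtx.neg i}) : Set (PVtx n m) × Set (PVtx n m)) ∈
      inducedArcs (Dphi φ) P :=
    ⟨Or.inr (Or.inr (Or.inl ⟨i, rfl⟩)), Set.singleton_subset_iff.mpr hs,
      Set.singleton_subset_iff.mpr hp⟩
  refine BConn.step _ hmem ?_ rfl
  rintro u hu
  rw [Set.mem_singleton_iff] at hu
  exact hu ▸ BConn.base

lemma bconnTrivial (φ : CNF3 n m) (i : Fin n) {P : Set (PVtx n m)}
    (hs : PVtx.s ∈ P) (hp : PVtx.pos i ∈ P) (hn : PVtx.neg i ∈ P) (ht : PVtx.t ∈ P) :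
    BConn (inducedArcs (Dphi φ) P) PVtx.s PVtx.t := by
  have hmem : (({PVtx.pos i, PVtx.neg i}, {PVtx.t}) : Set (PVtx n m) × Set (PVtx n m)) ∈
      inducedArcs (Dphi φ) P := by
    refine ⟨Or.inl ⟨i, rfl⟩, ?_, Set.singleton_subset_iff.mpr ht⟩
    intro u hu
    rcases hu with rfl | hu
    · exact hp
    · rw [Set.mem_singleton_iff] at hu; exact hu ▸ hn
  refine BConn.step _ hmem ?_ rfl
  intro u hu
  rcases hu with rfl | hu
  · exact bconnPos φ P i hs hp
  · rw [Set.mem_singleton_iff] at hu; exact hu ▸ bconnNeg φ P i hs hn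

lemma invPos (φ : CNF3 n m) (P : Set (PVtx n m)) (i : Fin n)
    (h : BConn (inducedArcs (Dphi φ) P) PVtx.s (PVtx.pos i)) :
    PVtx.s ∈ P ∧ PVtx.pos i ∈ P := by
  cases h with
  | step A hA hT hv =>
    obtain ⟨hD, hT1, hH1⟩ := hA
    rcases hD with ⟨i', h⟩ | ⟨i', h⟩ | ⟨i', h⟩ | ⟨j', k', h⟩ | h <;> subst h <;>
      simp only [Set.mem_singleton_iff, Set.mem_insert_iff, Set.mem_setOf_eq] at hv
    · simp at hv
    · simp only [PVtx.pos.injEq] at hv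
      subst hv
      exact ⟨hT1 rfl, hH1 rfl⟩
    · simp at hv
    · simp at hv
    · simp at hv

lemma invNeg (φ : CNF3 n m) (P : Set (PVtx n m)) (i : Fin n)
    (h : BConn (inducedArcs (Dphi φ) P) PVtx.s (PVtx.neg i)) :
    PVtx.s ∈ P ∧ PVtx.neg i ∈ P := by
  cases h with
  | step A hA hT hv =>
    obtain ⟨hD, hT1, hH1⟩ := hA
    rcases hD with ⟨i', h⟩ | ⟨i', h⟩ | ⟨i', h⟩ | ⟨j', k', h⟩ | h <;> subst h <;>
      simp only [Set.mem_singleton_iff, Set.mem_insert_iff, Set.mem_setOf_eq] at hv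
    · simp at hv
    · simp at hv
    · simp only [PVtx.neg.injEq] at hv
      subst hv
      exact ⟨hT1 rfl, hH1 rfl⟩
    · simp at hv
    · simp at hv

lemma invCls (φ : CNF3 n m) (P : Set (PVtx n m)) (j : Fin m)
    (h : BConn (inducedArcs (Dphi φ) P) PVtx.s (PVtx.cls j)) :
    ∃ k : Fin 3, litVtx (φ j k) ∈ P ∧
      BConn (inducedArcs (Dphi φ) P) PVtx.s (litVtx (φ j k)) := by
  cases h with
  | step A hA hT hv =>
    obtain ⟨hD, hT1, hH1⟩ := hA
    rcases hD with ⟨i', h⟩ | ⟨i', h⟩ | ⟨i', h⟩ | ⟨j', k', h⟩ | h <;> subst h <;>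
      simp only [Set.mem_singleton_iff, Set.mem_insert_iff, Set.mem_setOf_eq] at hv
    · simp at hv
    · simp at hv
    · simp at hv
    · simp only [PVtx.cls.injEq] at hv
      subst hv
      exact ⟨k', hT1 rfl, hT _ rfl⟩
    · simp at hv

lemma minForce (φ : CNF3 n m) {P : Set (PVtx n m)}
    (hmin : ∀ Q, Q ⊂ P → ¬ BConn (inducedArcs (Dphi φ) Q) PVtx.s PVtx.t)
    (i : Fin n) (hs : PVtx.s ∈ P) (hp : PVtx.pos i ∈ P) (hn : PVtx.neg i ∈ P)
    (ht : PVtx.t ∈ P) :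
    P = {PVtx.s, PVtx.pos i, PVtx.neg i, PVtx.t} := by
  set S : Set (PVtx n m) := {PVtx.s, PVtx.pos i, PVtx.neg i, PVtx.t} with hS
  have hSP : S ⊆ P := by
    intro u hu
    simp only [hS, Set.mem_insert_iff, Set.mem_singleton_iff] at hu
    rcases hu with rfl | rfl | rfl | rfl
    exacts [hs, hp, hn, ht]
  have hB : BConn (inducedArcs (Dphi φ) S) PVtx.s PVtx.t :=
    bconnTrivial φ i (by simp [hS]) (by simp [hS]) (by simp [hS]) (by simp [hS])
  by_contra hne
  exact hmin S (hSP.ssubset_of_ne fun h => hne h.symm) hB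

end Helpers

/-- `φ` has a satisfying assignment iff `D_φ` has an induced `s`-`t` hyperpath
that is not one of the trivial hyperpaths `{s, x_i, x̄_i, t}`. -/
theorem sat_iff_another_induced_hyperpath {n m : ℕ} (φ : CNF3 n m) :
    (∃ α : Fin n → Bool, Satisfies α φ) ↔
      ∃ P : Set (PVtx n m), IsInducedSTPath (Dphi φ) PVtx.s PVtx.t P ∧
        ¬ ∃ i : Fin n, P = {PVtx.s, PVtx.pos i, PVtx.neg i, PVtx.t} := by
  constructor
  · rintro ⟨α, hα⟩
    classical
    set P0 : Set (PVtx n m) :=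
      {v | v = PVtx.s ∨ v = PVtx.t ∨ (∃ j, v = PVtx.cls j) ∨ (∃ i, v = litVtx (i, α i))}
      with hP0
    have hsP0 : PVtx.s ∈ P0 := Or.inl rfl
    have htP0 : PVtx.t ∈ P0 := Or.inr (Or.inl rfl)
    have hclsP0 : ∀ j, PVtx.cls j ∈ P0 := fun j => Or.inr (Or.inr (Or.inl ⟨j, rfl⟩))
    have hlitP0 : ∀ i, (litVtx (i, α i) : PVtx n m) ∈ P0 :=
      fun i => Or.inr (Or.inr (Or.inr ⟨i, rfl⟩))
    have hlitB : ∀ i, BConn (inducedArcs (Dphi φ) P0) PVtx.s (litVtx (i, α i)) := by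
      intro i
      have hm := hlitP0 i
      cases h : α i <;> rw [h] at hm
      · exact bconnNeg φ P0 i hsP0 hm
      · exact bconnPos φ P0 i hsP0 hm
    have hclsB : ∀ j, BConn (inducedArcs (Dphi φ) P0) PVtx.s (PVtx.cls j) := by
      intro j
      obtain ⟨k, hk⟩ := hα j
      have hlv : litVtx (φ j k) = (litVtx ((φ j k).1, α (φ j k).1) : PVtx n m) := by
        simp [litVtx, hk]
      have hmemP0 : (litVtx (φ j k) : PVtx n m) ∈ P0 := by rw [hlv]; exact hlitP0 _
      have hmem : (({litVtx (φ j k)}, {PVtx.cls j}) : Set (PVtx n m) × Set (PVtx n m)) ∈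
          inducedArcs (Dphi φ) P0 :=
        ⟨Or.inr (Or.inr (Or.inr (Or.inl ⟨j, k, rfl⟩))),
          Set.singleton_subset_iff.mpr hmemP0,
          Set.singleton_subset_iff.mpr (hclsP0 j)⟩
      refine BConn.step _ hmem ?_ rfl
      intro u hu
      rw [Set.mem_singleton_iff] at hu
      subst hu
      rw [hlv]; exact hlitB _
    have htB : BConn (inducedArcs (Dphi φ) P0) PVtx.s PVtx.t := by
      have hmem : (({v | ∃ j : Fin m, v = PVtx.cls j}, {PVtx.t}) :
          Set (PVtx n m) × Set (PVtx n m)) ∈ inducedArcs (Dphi φ) P0 := by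
        refine ⟨Or.inr (Or.inr (Or.inr (Or.inr rfl))), ?_, Set.singleton_subset_iff.mpr htP0⟩
        rintro u ⟨j, rfl⟩; exact hclsP0 j
      refine BConn.step _ hmem ?_ rfl
      rintro u ⟨j, rfl⟩; exact hclsB j
    obtain ⟨P, ⟨hPsub, hPB⟩, hPmin⟩ :=
      (Set.toFinite {Q : Set (PVtx n m) |
          Q ⊆ P0 ∧ BConn (inducedArcs (Dphi φ) Q) PVtx.s PVtx.t}).exists_minimalFor
        id _ ⟨P0, subset_refl _, htB⟩
    refine ⟨P, ⟨hPB, ?_⟩, ?_⟩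
    · intro Q hQ hQB
      exact hQ.2 (hPmin ⟨hQ.subset.trans hPsub, hQB⟩ hQ.subset)
    · rintro ⟨i, rfl⟩
      have hp : PVtx.pos i ∈ P0 := hPsub (by simp)
      have hn : PVtx.neg i ∈ P0 := hPsub (by simp)
      rw [hP0, Set.mem_setOf_eq] at hp hn
      have hα1 : α i = true := by
        rcases hp with h | h | ⟨j, h⟩ | ⟨i', h⟩
        · cases h
        · cases h
        · cases h
        · cases hb : α i' <;> rw [hb] at h <;> simp [litVtx] at h
          rw [h]; exact hb
      have hα2 : α i = false := by
        rcases hn with h | h | ⟨j, h⟩ | ⟨i', h⟩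
        · cases h
        · cases h
        · cases h
        · cases hb : α i' <;> rw [hb] at h <;> simp [litVtx] at h
          rw [h]; exact hb
      rw [hα1] at hα2
      cases hα2
  · rintro ⟨P, ⟨hB, hmin⟩, hnt⟩
    classical
    cases hB with
    | step A hA hT hv =>
      obtain ⟨hD, hT1, hH1⟩ := hA
      rcases hD with ⟨i, h⟩ | ⟨i, h⟩ | ⟨i, h⟩ | ⟨j, k, h⟩ | h <;> subst h <;>
        simp only [Set.mem_singleton_iff] at hv
      · exfalso
        have hp : PVtx.pos i ∈ P := hT1 (Or.inl rfl)
        have hnn : PVtx.neg i ∈ P := hT1 (Or.inr rfl)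
        have ht : PVtx.t ∈ P := hH1 rfl
        have hposB := hT (PVtx.pos i) (Or.inl rfl)
        have hs : PVtx.s ∈ P := (invPos φ P i hposB).1
        exact hnt ⟨i, minForce φ hmin i hs hp hnn ht⟩
      · simp at hv
      · simp at hv
      · simp at hv
      · have ht : PVtx.t ∈ P := hH1 rfl
        refine ⟨fun i => if PVtx.pos i ∈ P then true else false, ?_⟩
        intro j
        obtain ⟨k, hkP, hkB⟩ := invCls φ P j (hT (PVtx.cls j) ⟨j, rfl⟩)
        cases hb : (φ j k).2
        · have hlv : (litVtx (φ j k) : PVtx n m) = PVtx.neg (φ j k).1 := by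
            simp [litVtx, hb]
          rw [hlv] at hkP hkB
          have hs : PVtx.s ∈ P := (invNeg φ P _ hkB).1
          have hnp : PVtx.pos (φ j k).1 ∉ P := by
            intro hp
            exact hnt ⟨_, minForce φ hmin _ hs hp hkP ht⟩
          exact ⟨k, by rw [hb]; simp [hnp]⟩
        · have hlv : (litVtx (φ j k) : PVtx n m) = PVtx.pos (φ j k).1 := by
            simp [litVtx, hb]
          rw [hlv] at hkP
          exact ⟨k, by rw [hb]; simp [hkP]⟩
end

section
/- Let φ be a 3-CNF formula over variables x_1,…,x_n, let D_φ be the directed hypergraph constructed from φ, and let α : {x_1,…,x_n} → {0,1} be a satisfying assignment of φ. Define U_α to be the vertex set of D_φ with, for each i, the vertex x_i removed if α(x_i) = 0 and the vertex x̄_i removed if α(x_i) = 1. Then every clause vertex c_j is B-connected from s in D_φ[U_α], and t is B-connected from s in D_φ[U_α]; consequently D_φ has an induced s-t hyperpath contained in U_α. -/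
section Aux

variable {n m : ℕ}

/-- The retained vertex set `U_α`. -/
def Ualpha (n m : ℕ) (α : Fin n → Bool) : Set (PVtx n m) :=
  Set.univ \ ({v | ∃ i : Fin n, α i = false ∧ v = PVtx.pos i} ∪
    {v | ∃ i : Fin n, α i = true ∧ v = PVtx.neg i})

lemma s_mem_U (α : Fin n → Bool) : (PVtx.s : PVtx n m) ∈ Ualpha n m α := by
  simp [Ualpha]

lemma t_mem_U (α : Fin n → Bool) : (PVtx.t : PVtx n m) ∈ Ualpha n m α := by
  simp [Ualpha]

lemma cls_mem_U (α : Fin n → Bool) (j : Fin m) :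
    (PVtx.cls j : PVtx n m) ∈ Ualpha n m α := by
  simp [Ualpha]

lemma litVtx_mem_U (α : Fin n → Bool) (ℓ : Fin n × Bool) (h : α ℓ.1 = ℓ.2) :
    (litVtx ℓ : PVtx n m) ∈ Ualpha n m α := by
  obtain ⟨i, b⟩ := ℓ
  cases b <;> simp_all [Ualpha, litVtx]

lemma arc_s_lit (φ : CNF3 n m) (ℓ : Fin n × Bool) :
    (({PVtx.s}, {litVtx ℓ}) : Set (PVtx n m) × Set (PVtx n m)) ∈ Dphi φ := by
  obtain ⟨i, b⟩ := ℓ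
  cases b
  · exact Or.inr (Or.inr (Or.inl ⟨i, rfl⟩))
  · exact Or.inr (Or.inl ⟨i, rfl⟩)

lemma litVtx_conn (φ : CNF3 n m) (α : Fin n → Bool) (ℓ : Fin n × Bool)
    (h : α ℓ.1 = ℓ.2) :
    BConn (inducedArcs (Dphi φ) (Ualpha n m α)) PVtx.s (litVtx ℓ) := by
  have hA : (({PVtx.s}, {litVtx ℓ}) : Set (PVtx n m) × Set (PVtx n m)) ∈
      inducedArcs (Dphi φ) (Ualpha n m α) := by
    refine ⟨arc_s_lit φ ℓ, ?_, ?_⟩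
    · intro u hu; rcases hu with rfl; exact s_mem_U α
    · intro u hu; rcases hu with rfl; exact litVtx_mem_U α ℓ h
  exact BConn.step _ hA (fun u hu => by rcases hu with rfl; exact BConn.base) rfl

lemma cls_conn (φ : CNF3 n m) (α : Fin n → Bool) (hα : Satisfies α φ) (j : Fin m) :
    BConn (inducedArcs (Dphi φ) (Ualpha n m α)) PVtx.s (PVtx.cls j) := by
  obtain ⟨k, hk⟩ := hα j
  have hA : (({litVtx (φ j k)}, {PVtx.cls j}) : Set (PVtx n m) × Set (PVtx n m)) ∈
      inducedArcs (Dphi φ) (Ualpha n m α) := by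
    refine ⟨Or.inr (Or.inr (Or.inr (Or.inl ⟨j, k, rfl⟩))), ?_, ?_⟩
    · intro u hu; rcases hu with rfl; exact litVtx_mem_U α _ hk
    · intro u hu; rcases hu with rfl; exact cls_mem_U α j
  exact BConn.step _ hA (fun u hu => by rcases hu with rfl; exact litVtx_conn φ α _ hk) rfl

lemma t_conn (φ : CNF3 n m) (α : Fin n → Bool) (hα : Satisfies α φ) :
    BConn (inducedArcs (Dphi φ) (Ualpha n m α)) PVtx.s PVtx.t := by
  have hA : (({v | ∃ j : Fin m, v = PVtx.cls j}, {PVtx.t}) :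
      Set (PVtx n m) × Set (PVtx n m)) ∈ inducedArcs (Dphi φ) (Ualpha n m α) := by
    refine ⟨Or.inr (Or.inr (Or.inr (Or.inr rfl))), ?_, ?_⟩
    · rintro u ⟨j, rfl⟩; exact cls_mem_U α j
    · intro u hu; rcases hu with rfl; exact t_mem_U α
  exact BConn.step _ hA (fun u hu => by obtain ⟨j, rfl⟩ := hu; exact cls_conn φ α hα j) rfl

instance inst_s2 : Finite (PVtx n m) := by
  have hinj : Function.Injective (fun v : PVtx n m => match v with
      | PVtx.s => (Sum.inl true : Bool ⊕ (Fin n ⊕ Fin n ⊕ Fin m))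
      | PVtx.t => Sum.inl false
      | PVtx.pos i => Sum.inr (Sum.inl i)
      | PVtx.neg i => Sum.inr (Sum.inr (Sum.inl i))
      | PVtx.cls j => Sum.inr (Sum.inr (Sum.inr j))) := by
    intro a b h
    cases a <;> cases b <;> simp_all
  exact Finite.of_injective _ hinj

end Aux

/-- if `α` satisfies `φ` and `U_α` is obtained from the vertex set of `D_φ` by
removing `x_i` when `α(x_i) = 0` and `x̄_i` when `α(x_i) = 1`, then every clause vertex `c_j`
is B-connected from `s` in `D_φ[U_α]`, `t` is B-connected from `s` in `D_φ[U_α]`, and `D_φ`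
has an induced `s`-`t` hyperpath contained in `U_α`. -/
theorem satisfying_assignment_gives_hyperpath {n m : ℕ} (φ : CNF3 n m)
    (α : Fin n → Bool) (hα : Satisfies α φ) :
    (∀ j : Fin m, BConn
        (inducedArcs (Dphi φ)
          (Set.univ \ ({v | ∃ i : Fin n, α i = false ∧ v = PVtx.pos i} ∪
            {v | ∃ i : Fin n, α i = true ∧ v = PVtx.neg i})))
        PVtx.s (PVtx.cls j)) ∧
    BConn
        (inducedArcs (Dphi φ)
          (Set.univ \ ({v | ∃ i : Fin n, α i = false ∧ v = PVtx.pos i} ∪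
            {v | ∃ i : Fin n, α i = true ∧ v = PVtx.neg i})))
        PVtx.s PVtx.t ∧
    ∃ P : Set (PVtx n m),
      P ⊆ Set.univ \ ({v | ∃ i : Fin n, α i = false ∧ v = PVtx.pos i} ∪
            {v | ∃ i : Fin n, α i = true ∧ v = PVtx.neg i}) ∧
      IsInducedSTPath (Dphi φ) PVtx.s PVtx.t P := by
  refine ⟨fun j => cls_conn φ α hα j, t_conn φ α hα, ?_⟩
  have hwf : WellFounded ((· < ·) : Set (PVtx n m) → Set (PVtx n m) → Prop) :=
    IsWellFounded.wf
  obtain ⟨P, ⟨hPU, hPc⟩, hmin⟩ := hwf.has_min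
    {Q | Q ⊆ Ualpha n m α ∧ BConn (inducedArcs (Dphi φ) Q) PVtx.s PVtx.t}
    ⟨Ualpha n m α, subset_rfl, t_conn φ α hα⟩
  exact ⟨P, hPU, hPc, fun Q hQ hc => hmin Q ⟨hQ.subset.trans hPU, hc⟩ hQ⟩
end

section
/- Let φ be a 3-CNF formula over variables x_1,…,x_n, let D_φ be the directed hypergraph constructed from φ, and let 𝒫_φ = { {s, x_i, x̄_i, t} : 1 ≤ i ≤ n }. If P is an induced s-t hyperpath of D_φ with P ∉ 𝒫_φ, then (i) for every 1 ≤ i ≤ n, not both x_i ∈ P and x̄_i ∈ P; (ii) {c_1,…,c_m} ⊆ P; and (iii) the assignment α_P defined by α_P(x_i) = 1 if x_i ∈ P and α_P(x_i) = 0 otherwise satisfies φ. -/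
lemma mem_inducedArcs {V : Type*} {𝒜 : Set (Set V × Set V)} {U : Set V}
    {A : Set V × Set V} (h : A ∈ 𝒜) (h1 : A.1 ⊆ U) (h2 : A.2 ⊆ U) :
    A ∈ inducedArcs 𝒜 U := ⟨h, h1, h2⟩

lemma bconn_sMem {n m : ℕ} {φ : CNF3 n m} {P : Set (PVtx n m)} {v : PVtx n m}
    (h : BConn (inducedArcs (Dphi φ) P) PVtx.s v)
    (hv : (∃ i, v = PVtx.pos i) ∨ (∃ i, v = PVtx.neg i)) : PVtx.s ∈ P := by
  cases h with
  | base => rcases hv with ⟨i, h⟩ | ⟨i, h⟩ <;> simp at h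
  | step A hA hT hmem =>
    obtain ⟨hD, h1, h2⟩ := hA
    rcases hD with ⟨i, rfl⟩ | ⟨i, rfl⟩ | ⟨i, rfl⟩ | ⟨j, k, rfl⟩ | rfl
    · simp only [Set.mem_singleton_iff] at hmem
      subst hmem; rcases hv with ⟨i', h⟩ | ⟨i', h⟩ <;> simp at h
    · exact h1 rfl
    · exact h1 rfl
    · simp only [Set.mem_singleton_iff] at hmem
      subst hmem; rcases hv with ⟨i', h⟩ | ⟨i', h⟩ <;> simp at h
    · simp only [Set.mem_singleton_iff] at hmem
      subst hmem; rcases hv with ⟨i', h⟩ | ⟨i', h⟩ <;> simp at h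

lemma bconn_cls {n m : ℕ} {φ : CNF3 n m} {P : Set (PVtx n m)} {j : Fin m}
    (h : BConn (inducedArcs (Dphi φ) P) PVtx.s (PVtx.cls j)) :
    ∃ k, litVtx (φ j k) ∈ P ∧ BConn (inducedArcs (Dphi φ) P) PVtx.s (litVtx (φ j k)) := by
  cases h with
  | step A hA hT hmem =>
    obtain ⟨hD, h1, h2⟩ := hA
    rcases hD with ⟨i, rfl⟩ | ⟨i, rfl⟩ | ⟨i, rfl⟩ | ⟨j', k, rfl⟩ | rfl
    · simp at hmem
    · simp at hmem
    · simp at hmem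
    · simp only [Set.mem_singleton_iff, PVtx.cls.injEq] at hmem
      subst hmem
      exact ⟨k, h1 rfl, hT _ rfl⟩
    · simp at hmem

lemma bconnQ {n m : ℕ} (φ : CNF3 n m) (i : Fin n) :
    BConn (inducedArcs (Dphi φ) {PVtx.s, PVtx.pos i, PVtx.neg i, PVtx.t}) PVtx.s PVtx.t := by
  set Q : Set (PVtx n m) := {PVtx.s, PVtx.pos i, PVtx.neg i, PVtx.t} with hQdef
  have hbase : ∀ u ∈ ({PVtx.s} : Set (PVtx n m)),
      BConn (inducedArcs (Dphi φ) Q) PVtx.s u := by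
    intro u hu; simp only [Set.mem_singleton_iff] at hu; subst hu; exact BConn.base
  have hsQ : ({PVtx.s} : Set (PVtx n m)) ⊆ Q := by
    intro u hu; simp only [Set.mem_singleton_iff] at hu; subst hu; simp [hQdef]
  have hp : BConn (inducedArcs (Dphi φ) Q) PVtx.s (PVtx.pos i) :=
    BConn.step ({PVtx.s}, {PVtx.pos i})
      (mem_inducedArcs (Or.inr (Or.inl ⟨i, rfl⟩)) hsQ
        (by intro u hu; simp only [Set.mem_singleton_iff] at hu; subst hu; simp [hQdef]))
      hbase rfl
  have hn : BConn (inducedArcs (Dphi φ) Q) PVtx.s (PVtx.neg i) :=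
    BConn.step ({PVtx.s}, {PVtx.neg i})
      (mem_inducedArcs (Or.inr (Or.inr (Or.inl ⟨i, rfl⟩))) hsQ
        (by intro u hu; simp only [Set.mem_singleton_iff] at hu; subst hu; simp [hQdef]))
      hbase rfl
  refine BConn.step ({PVtx.pos i, PVtx.neg i}, {PVtx.t})
    (mem_inducedArcs (Or.inl ⟨i, rfl⟩) ?_ ?_) ?_ rfl
  · intro u hu; simp only [Set.mem_insert_iff, Set.mem_singleton_iff] at hu
    rcases hu with rfl | rfl <;> simp [hQdef]
  · intro u hu; simp only [Set.mem_singleton_iff] at hu; subst hu; simp [hQdef]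
  · intro u hu; simp only [Set.mem_insert_iff, Set.mem_singleton_iff] at hu
    rcases hu with rfl | rfl
    · exact hp
    · exact hn

lemma bconnT {n : ℕ} (φ : CNF3 n 0) :
    BConn (inducedArcs (Dphi φ) {PVtx.t}) PVtx.s PVtx.t := by
  refine BConn.step ({v | ∃ j : Fin 0, v = PVtx.cls j}, {PVtx.t})
    (mem_inducedArcs (Or.inr (Or.inr (Or.inr (Or.inr rfl)))) ?_ ?_) ?_ rfl
  · rintro v ⟨j, _⟩; exact j.elim0
  · exact subset_rfl
  · rintro v ⟨j, _⟩; exact j.elim0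


open Classical in
/-- if `P` is an induced `s`-`t` hyperpath of `D_φ` other than the trivial ones
`{s, x_i, x̄_i, t}`, then (i) no pair `x_i, x̄_i` is fully contained in `P`,
(ii) all clause vertices are in `P`, and (iii) the assignment `α_P` (with `α_P(x_i) = 1`
iff `x_i ∈ P`) satisfies `φ`. -/
theorem nontrivial_hyperpath_gives_assignment {n m : ℕ} (φ : CNF3 n m)
    (P : Set (PVtx n m)) (hP : IsInducedSTPath (Dphi φ) PVtx.s PVtx.t P)
    (hP' : ¬ ∃ i : Fin n, P = {PVtx.s, PVtx.pos i, PVtx.neg i, PVtx.t}) :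
    (∀ i : Fin n, ¬ (PVtx.pos i ∈ P ∧ PVtx.neg i ∈ P)) ∧
    (∀ j : Fin m, PVtx.cls j ∈ P) ∧
    Satisfies (fun i => if PVtx.pos i ∈ P then true else false) φ := by
  obtain ⟨hBC, hmin⟩ := hP
  have key : ∀ Q, Q ⊆ P → BConn (inducedArcs (Dphi φ) Q) PVtx.s PVtx.t → Q = P := by
    intro Q hsub hb
    by_contra hne
    exact hmin Q (ssubset_of_subset_of_ne hsub hne) hb
  cases hBC with
  | step A hA hT hv =>
    obtain ⟨hD, h1, h2⟩ := hA
    rcases hD with ⟨i, rfl⟩ | ⟨i, rfl⟩ | ⟨i, rfl⟩ | ⟨j, k, rfl⟩ | rfl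
    · -- pair arc: forces P = {s, pos i, neg i, t}, contradiction
      exfalso
      have hpos : PVtx.pos i ∈ P := h1 (Set.mem_insert _ _)
      have hneg : PVtx.neg i ∈ P := h1 (by simp)
      have ht : PVtx.t ∈ P := h2 rfl
      have hs : PVtx.s ∈ P := bconn_sMem (hT _ (Set.mem_insert _ _)) (Or.inl ⟨i, rfl⟩)
      have hQ : ({PVtx.s, PVtx.pos i, PVtx.neg i, PVtx.t} : Set (PVtx n m)) ⊆ P := by
        intro u hu
        simp only [Set.mem_insert_iff, Set.mem_singleton_iff] at hu
        rcases hu with rfl | rfl | rfl | rfl <;> assumption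
      exact hP' ⟨i, (key _ hQ (bconnQ φ i)).symm⟩
    · simp at hv
    · simp at hv
    · simp at hv
    · -- clause arc
      have ht : PVtx.t ∈ P := h2 rfl
      have hcls : ∀ j : Fin m, PVtx.cls j ∈ P := fun j => h1 ⟨j, rfl⟩
      have hi : ∀ i : Fin n, ¬ (PVtx.pos i ∈ P ∧ PVtx.neg i ∈ P) := by
        rintro i ⟨hpos, hneg⟩
        have hs : PVtx.s ∈ P := by
          rcases Nat.eq_zero_or_pos m with hm | hm
          · subst hm
            have hPt := key {PVtx.t} (Set.singleton_subset_iff.mpr ht) (bconnT φ)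
            rw [← hPt] at hpos; simp at hpos
          · obtain ⟨k, hk, hbk⟩ := bconn_cls (hT (PVtx.cls ⟨0, hm⟩) ⟨_, rfl⟩)
            refine bconn_sMem hbk ?_
            rcases hφ : φ ⟨0, hm⟩ k with ⟨i', b⟩
            cases b
            · exact Or.inr ⟨i', by simp [litVtx, hφ]⟩
            · exact Or.inl ⟨i', by simp [litVtx, hφ]⟩
        have hQ : ({PVtx.s, PVtx.pos i, PVtx.neg i, PVtx.t} : Set (PVtx n m)) ⊆ P := by
          intro u hu
          simp only [Set.mem_insert_iff, Set.mem_singleton_iff] at hu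
          rcases hu with rfl | rfl | rfl | rfl <;> assumption
        exact hP' ⟨i, (key _ hQ (bconnQ φ i)).symm⟩
      refine ⟨hi, hcls, ?_⟩
      intro j
      obtain ⟨k, hk, _⟩ := bconn_cls (hT (PVtx.cls j) ⟨j, rfl⟩)
      refine ⟨k, ?_⟩
      rcases hφ : φ j k with ⟨i', b⟩
      rw [hφ] at hk
      simp only [hφ]
      cases b
      · simp only [litVtx, cond_false] at hk
        have hnp : PVtx.pos i' ∉ P := fun hp => hi i' ⟨hp, hk⟩
        simp [hnp]
      · simp only [litVtx, cond_true] at hk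
        simp [hk]
end

section
/- Let H = (V, ℰ) be a (finite) hypergraph and let D_H be the BF-hypergraph constructed from H. For every minimal transversal T of H, the set of hyperarcs f(T) = { ({s}, ℰ_v) : v ∈ T } ∪ { (ℰ, {t}) } is an s-t hyperpath in D_H; that is, t is B-connected from s in D_H[f(T)] and no proper subset of f(T) has this property. -/
/-- A set of hyperarcs `P ⊆ 𝒜` is an `src`-`tgt` hyperpath if `tgt` is B-connected from
`src` in the edge-induced subhypergraph `D[P]` and `P` is inclusion-wise minimal with this
property. -/
def IsSTHyperpath {V : Type*} (𝒜 : Set (Set V × Set V)) (src tgt : V)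
    (P : Set (Set V × Set V)) : Prop :=
  P ⊆ 𝒜 ∧ BConn P src tgt ∧ ∀ Q, Q ⊂ P → ¬ BConn Q src tgt

/-- `U` is a transversal of the hypergraph with hyperedge set `ℰ`. -/
def IsTransversal {V : Type*} (ℰ : Set (Set V)) (U : Set V) : Prop :=
  ∀ E ∈ ℰ, (U ∩ E).Nonempty

/-- `U` is a minimal transversal of the hypergraph with hyperedge set `ℰ`. -/
def IsMinTransversal {V : Type*} (ℰ : Set (Set V)) (U : Set V) : Prop :=
  IsTransversal ℰ U ∧ ∀ U', U' ⊂ U → ¬ IsTransversal ℰ U'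

/-- Vertices of `D_H`: a vertex for each hyperedge of `H` (`Sum.inl E`), together with
`s = Sum.inr false` and `t = Sum.inr true`. -/
abbrev HVtx (V : Type*) := Set V ⊕ Bool

/-- The hyperarc `({s}, ℰ_v)` of `D_H`, where `ℰ_v` is the set of hyperedges containing
`v`. -/
def sArc {V : Type*} (ℰ : Set (Set V)) (v : V) : Set (HVtx V) × Set (HVtx V) :=
  ({Sum.inr false}, {w | ∃ E ∈ ℰ, v ∈ E ∧ w = Sum.inl E})

/-- The hyperarc `(ℰ, {t})` of `D_H`. -/
def tArc {V : Type*} (ℰ : Set (Set V)) : Set (HVtx V) × Set (HVtx V) :=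
  ({w | ∃ E ∈ ℰ, w = Sum.inl E}, {Sum.inr true})

/-- The hyperarcs of the `BF`-hypergraph `D_H` built from the hypergraph `H = (V, ℰ)`. -/
def DHyp {V : Type*} (ℰ : Set (Set V)) : Set (Set (HVtx V) × Set (HVtx V)) :=
  {A | (∃ v : V, A = sArc ℰ v) ∨ A = tArc ℰ}

/-- The map `f` sending a (minimal) transversal `T` to the arc set
`{({s}, ℰ_v) : v ∈ T} ∪ {(ℰ, {t})}`. -/
def fArcs {V : Type*} (ℰ : Set (Set V)) (T : Set V) : Set (Set (HVtx V) × Set (HVtx V)) :=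
  insert (tArc ℰ) {A | ∃ v ∈ T, A = sArc ℰ v}


lemma reach_inl {V : Type*} (ℰ : Set (Set V)) (T : Set V)
    (Q : Set (Set (HVtx V) × Set (HVtx V))) (hQ : Q ⊆ fArcs ℰ T) (E : Set V)
    (h : BConn Q (Sum.inr false) (Sum.inl E)) :
    ∃ v ∈ T, sArc ℰ v ∈ Q ∧ v ∈ E := by
  cases h with
  | step A hA hTl hv =>
    rcases hQ hA with h1 | ⟨v, hvT, rfl⟩
    · subst h1; simp [tArc] at hv
    · obtain ⟨E', hE', hvE', hEq⟩ := hv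
      obtain rfl : E = E' := by injection hEq
      exact ⟨v, hvT, hA, hvE'⟩

/-- for every minimal transversal `T` of `H`, the arc set `f(T)` is an
`s`-`t` hyperpath of `D_H`; that is, `t` is B-connected from `s` in `D_H[f(T)]` and no
proper subset of `f(T)` has this property. -/
theorem minTransversal_gives_hyperpath {V : Type*} [Fintype V] (ℰ : Set (Set V))
    (T : Set V) (hT : IsMinTransversal ℰ T) :
    IsSTHyperpath (DHyp ℰ) (Sum.inr false) (Sum.inr true) (fArcs ℰ T) ∧
    BConn (fArcs ℰ T) (Sum.inr false) (Sum.inr true) ∧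
    ∀ Q, Q ⊂ fArcs ℰ T → ¬ BConn Q (Sum.inr false) (Sum.inr true) := by
  have hconn : BConn (fArcs ℰ T) (Sum.inr false) (Sum.inr true) := by
    refine BConn.step (tArc ℰ) (Set.mem_insert _ _) ?_ (by simp [tArc])
    rintro u ⟨E, hE, rfl⟩
    obtain ⟨v, hvT, hvE⟩ := hT.1 E hE
    refine BConn.step (sArc ℰ v) (Or.inr ⟨v, hvT, rfl⟩) ?_ ⟨E, hE, hvE, rfl⟩
    rintro u hu
    simp only [sArc, Set.mem_singleton_iff] at hu
    subst hu; exact BConn.base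
  have hsubA : fArcs ℰ T ⊆ DHyp ℰ := by
    rintro A (h | ⟨v, hvT, rfl⟩)
    · exact Or.inr h
    · exact Or.inl ⟨v, rfl⟩
  have hmin : ∀ Q, Q ⊂ fArcs ℰ T → ¬ BConn Q (Sum.inr false) (Sum.inr true) := by
    intro Q hQ hB
    cases hB with
    | step A hA hTl hv =>
      rcases hQ.1 hA with h1 | ⟨v, hvT, rfl⟩
      · subst h1
        obtain ⟨B, hBf, hBQ⟩ := Set.exists_of_ssubset hQ
        rcases hBf with h2 | ⟨v0, hv0T, rfl⟩
        · exact hBQ (h2 ▸ hA)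
        · have hsub : {v | v ∈ T ∧ sArc ℰ v ∈ Q} ⊆ T := fun v hv => hv.1
          have hv0 : v0 ∉ {v | v ∈ T ∧ sArc ℰ v ∈ Q} := fun h => hBQ h.2
          have hss : {v | v ∈ T ∧ sArc ℰ v ∈ Q} ⊂ T :=
            ⟨hsub, fun hsub2 => hv0 (hsub2 hv0T)⟩
          have hnt := hT.2 _ hss
          rw [IsTransversal] at hnt
          push_neg at hnt
          obtain ⟨E, hE, hne⟩ := hnt
          have hreach : BConn Q (Sum.inr false) (Sum.inl E) := hTl _ ⟨E, hE, rfl⟩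
          obtain ⟨v, hvT', hvQ, hvE⟩ := reach_inl ℰ T Q hQ.1 E hreach
          have : v ∈ {v | v ∈ T ∧ sArc ℰ v ∈ Q} ∩ E := ⟨⟨hvT', hvQ⟩, hvE⟩
          rw [hne] at this
          exact this
      · obtain ⟨E, _, _, h⟩ := hv
        exact (Sum.inr_ne_inl h).elim
  exact ⟨⟨hsubA, hconn, hmin⟩, hconn, hmin⟩
end

section
/- Let D = (V, 𝒜) be a B-hypergraph (parallel hyperarcs allowed), let S, T ⊆ V, and let P ⊆ 𝒜 be a finite set of hyperarcs. Then P is an S-T hyperpath if and only if the following three conditions hold: (1) there is an ordering (A_1, …, A_{|P|}) of P such that for each i, T(A_i) ⊆ S ∪ ⋃_{1 ≤ j ≤ i−1} H(A_j); (2) for every vertex v of D[P] and every vertex v ∈ T, the number of hyperarcs A ∈ P with H(A) = {v} is 0 if v ∈ S and exactly 1 otherwise; and (3) every vertex v of D[P] with v ∉ T ∪ S lies in the tail of at least one hyperarc of P. -/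
/-!
A `B`-hypergraph (parallel hyperarcs allowed) on a vertex type `V` is modelled by an
arc-index type `A` together with a tail map `tl : A → Set V`, a head map `hd : A → V`
(every hyperarc is a `B`-hyperarc, i.e. its head set is the singleton `{hd a}`), and a set
`𝒜 : Set A` of hyperarcs.  Disjointness of tails and heads is the condition
`∀ a ∈ 𝒜, hd a ∉ tl a`.
-/

/-- B-connection from a set `S` of vertices in the edge-induced subhypergraph `D[P]`:
every vertex of `S` is B-connected from `S`, and if all tail vertices of an arc `a ∈ P`
are B-connected from `S`, then its head `hd a` is B-connected from `S`. -/
inductive BConnB {V A : Type*} (tl : A → Set V) (hd : A → V) (P : Set A) (S : Set V) :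
    V → Prop
  | base {v : V} (hv : v ∈ S) : BConnB tl hd P S v
  | step (a : A) (ha : a ∈ P) (hT : ∀ u ∈ tl a, BConnB tl hd P S u) :
      BConnB tl hd P S (hd a)

/-- A set of hyperarcs `P ⊆ 𝒜` is an `S`-`T` hyperpath if every vertex of `T` is
B-connected from `S` in `D[P]` and `P` is inclusion-wise minimal with this property. -/
def IsSTHyp {V A : Type*} (tl : A → Set V) (hd : A → V) (𝒜 : Set A) (S T : Set V)
    (P : Set A) : Prop :=
  P ⊆ 𝒜 ∧ (∀ v ∈ T, BConnB tl hd P S v) ∧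
    ∀ Q, Q ⊂ P → ¬ (∀ v ∈ T, BConnB tl hd Q S v)

/-- The ordering condition on a list `(A_1, …, A_k)` of hyperarcs:
`T(A_i) ⊆ S ∪ ⋃_{j < i} H(A_j)` for every `i`. -/
def GoodOrder {V A : Type*} (tl : A → Set V) (hd : A → V) (S : Set V) (l : List A) : Prop :=
  ∀ i : Fin l.length,
    tl (l.get i) ⊆ S ∪ {v | ∃ j : Fin l.length, j < i ∧ v = hd (l.get j)}

/-- The vertex set of the edge-induced subhypergraph `D[P]`. -/
def dverts {V A : Type*} (tl : A → Set V) (hd : A → V) (P : Set A) : Set V :=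
  {v | ∃ a ∈ P, v ∈ tl a ∨ v = hd a}

/- Auxiliary lemmas -/
section Aux
variable {V A : Type*} {tl : A → Set V} {hd : A → V} {S : Set V}

lemma bconn_mono {P Q : Set A} (hPQ : P ⊆ Q) {v : V} (h : BConnB tl hd P S v) :
    BConnB tl hd Q S v := by
  induction h with
  | base hv => exact .base hv
  | step a ha hT ih => exact .step a (hPQ ha) ih

lemma bconn_elim {P : Set A} {v : V} (h : BConnB tl hd P S v) (hv : v ∉ S) :
    ∃ a ∈ P, hd a = v ∧ ∀ u ∈ tl a, BConnB tl hd P S u := by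
  cases h with
  | base h => exact absurd h hv
  | step a ha hT => exact ⟨a, ha, rfl, hT⟩

lemma goodOrder_conn_aux {l : List A} (hl : GoodOrder tl hd S l) (Q : Set A)
    (hQ : ∀ k : Fin l.length, l.get k ∈ Q ∨ hd (l.get k) ∈ S ∨
      ∃ j : Fin l.length, j < k ∧ hd (l.get j) = hd (l.get k)) :
    ∀ k : Fin l.length, BConnB tl hd Q S (hd (l.get k)) := by
  have main : ∀ n : ℕ, ∀ k : Fin l.length, k.val < n → BConnB tl hd Q S (hd (l.get k)) := by
    intro n
    induction n with
    | zero => intro k hk; omega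
    | succ n ih =>
      intro k hk
      rcases hQ k with hkQ | hS | ⟨j, hj, hjk⟩
      · refine .step _ hkQ fun u hu => ?_
        rcases hl k hu with h | ⟨j, hj, rfl⟩
        · exact .base h
        · have hj' : j.val < k.val := hj
          exact ih j (by omega)
      · exact .base hS
      · have hj' : j.val < k.val := hj
        exact hjk ▸ ih j (by omega)
  exact fun k => main (k.val + 1) k (Nat.lt_succ_self _)

lemma goodOrder_append {l : List A} (hl : GoodOrder tl hd S l) {a : A}
    (ha : tl a ⊆ S ∪ {v | ∃ b ∈ l, hd b = v}) : GoodOrder tl hd S (l ++ [a]) := by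
  intro i u hu
  have hilen : i.val < l.length + 1 := by simpa using i.isLt
  by_cases hi : i.val < l.length
  · have hget : (l ++ [a]).get i = l.get ⟨i.val, hi⟩ := by
      simp [List.get_eq_getElem, List.getElem_append_left hi]
    rw [hget] at hu
    rcases hl ⟨i.val, hi⟩ hu with h | ⟨j, hj, rfl⟩
    · exact Or.inl h
    · have hj' : j.val < i.val := hj
      refine Or.inr ⟨⟨j.val, by simp⟩, hj', ?_⟩
      have : (l ++ [a]).get ⟨j.val, by simp⟩ = l.get ⟨j.val, j.isLt⟩ := by
        simp [List.get_eq_getElem, List.getElem_append_left j.isLt]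
      rw [this]
  · have hi' : i.val = l.length := by omega
    have hget : (l ++ [a]).get i = a := by
      simp [List.get_eq_getElem, List.getElem_append_right (le_of_eq hi'.symm), hi']
    rw [hget] at hu
    rcases ha hu with h | ⟨b, hbl, rfl⟩
    · exact Or.inl h
    · obtain ⟨j, hj⟩ := List.mem_iff_get.mp hbl
      refine Or.inr ⟨⟨j.val, by simp⟩, ?_, ?_⟩
      · show j.val < i.val
        omega
      · have : (l ++ [a]).get ⟨j.val, by simp⟩ = l.get ⟨j.val, j.isLt⟩ := by
          simp [List.get_eq_getElem, List.getElem_append_left j.isLt]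
        rw [this, hj]

lemma bconn_remove_headS {P : Set A} {b : A} (hb : hd b ∈ S) {v : V}
    (h : BConnB tl hd P S v) : BConnB tl hd (P \ {b}) S v := by
  induction h with
  | base hv => exact .base hv
  | step a ha hT ih =>
    by_cases hab : a = b
    · subst hab; exact .base hb
    · exact .step a ⟨ha, hab⟩ ih

lemma bconn_remove_unused {P : Set A} {b : A}
    (hb2 : ∀ a ∈ P, hd b ∉ tl a) {v : V} (h : BConnB tl hd P S v) :
    v ≠ hd b → BConnB tl hd (P \ {b}) S v := by
  induction h with
  | base hv' => exact fun _ => .base hv'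
  | step a ha hT ih =>
    intro hv
    have hab : a ≠ b := fun h => hv (h ▸ rfl)
    exact .step a ⟨ha, hab⟩ fun u hu => ih u hu (fun h => hb2 a ha (h ▸ hu))

end Aux

/-- characterization of `S`-`T` hyperpaths in a `B`-hypergraph.  A finite
set `P ⊆ 𝒜` of hyperarcs is an `S`-`T` hyperpath iff (1) `P` admits an ordering
`(A_1, …, A_{|P|})` with `T(A_i) ⊆ S ∪ ⋃_{j<i} H(A_j)`; (2) for every vertex `v` of `D[P]`
and every `v ∈ T`, the number of arcs of `P` with head `v` is `0` if `v ∈ S` and exactly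
`1` otherwise; and (3) every vertex of `D[P]` outside `T ∪ S` lies in the tail of at least
one arc of `P`. -/
theorem isSTHyp_iff {V A : Type*} (tl : A → Set V) (hd : A → V) (𝒜 : Set A)
    (S T : Set V) (hdisj : ∀ a ∈ 𝒜, hd a ∉ tl a)
    (P : Set A) (hPA : P ⊆ 𝒜) (hPfin : P.Finite) :
    IsSTHyp tl hd 𝒜 S T P ↔
      ((∃ l : List A, l.Nodup ∧ {a | a ∈ l} = P ∧ GoodOrder tl hd S l) ∧
       (∀ v : V, v ∈ dverts tl hd P ∪ T →
          (v ∈ S → {a ∈ P | hd a = v}.ncard = 0) ∧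
          (v ∉ S → {a ∈ P | hd a = v}.ncard = 1)) ∧
       (∀ v ∈ dverts tl hd P, v ∉ T ∪ S → ∃ a ∈ P, v ∈ tl a)) := by
  unfold IsSTHyp
  classical
  have hfinsep : ∀ v : V, ({a ∈ P | hd a = v}).Finite :=
    fun v => hPfin.subset (Set.sep_subset _ _)
  constructor
  · rintro ⟨hPA', hconn, hmin⟩
    -- a longest good list with entries in P
    set L : Set (List A) := {l | l.Nodup ∧ (∀ a ∈ l, a ∈ P) ∧ GoodOrder tl hd S l} with hLdef
    have hLne : ([] : List A) ∈ L := ⟨List.nodup_nil, by simp, fun i => absurd i.isLt (by simp)⟩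
    have hbdd : ∀ l ∈ L, l.length ≤ hPfin.toFinset.card := by
      rintro l ⟨hnd, hmem, -⟩
      rw [← List.toFinset_card_of_nodup hnd]
      apply Finset.card_le_card
      intro a ha
      rw [List.mem_toFinset] at ha
      rw [Set.Finite.mem_toFinset]
      exact hmem a ha
    obtain ⟨l, hlL, hlmax⟩ : ∃ l ∈ L, ∀ l' ∈ L, l'.length ≤ l.length := by
      have h1 : (List.length '' L).Nonempty := ⟨0, ⟨[], hLne, rfl⟩⟩
      have h2 : BddAbove (List.length '' L) := by
        refine ⟨hPfin.toFinset.card, ?_⟩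
        rintro n ⟨l, hl, rfl⟩
        exact hbdd l hl
      obtain ⟨l, hl, hlen⟩ := Nat.sSup_mem h1 h2
      exact ⟨l, hl, fun l' hl' => hlen ▸ le_csSup h2 ⟨l', hl', rfl⟩⟩
    obtain ⟨hnd, hsub, hgood⟩ := hlL
    have hgetinj : Function.Injective l.get := List.nodup_iff_injective_get.mp hnd
    -- Lemma B : every connected vertex is in S or a head of an arc of l
    have hB : ∀ v, BConnB tl hd P S v → v ∈ S ∨ ∃ b ∈ l, hd b = v := by
      intro v hv
      induction hv with
      | base h => exact Or.inl h
      | step a ha hT ih =>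
        by_cases hal : a ∈ l
        · exact Or.inr ⟨a, hal, rfl⟩
        · exfalso
          have hmemL : (l ++ [a]) ∈ L := by
            refine ⟨?_, ?_, goodOrder_append hgood ?_⟩
            · rw [List.nodup_append]
              exact ⟨hnd, List.nodup_singleton a, by
                intro x hx y hy hxy; simp at hy; subst hy; subst hxy; exact hal hx⟩
            · intro b hb
              rcases List.mem_append.mp hb with h | h
              · exact hsub b h
              · simp at h; subst h; exact ha
            · intro u hu
              rcases ih u hu with h | ⟨b, hb, hbu⟩
              · exact Or.inl h
              · exact Or.inr ⟨b, hb, hbu⟩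
          have := hlmax _ hmemL
          simp at this
    -- connectivity inside the arcs of l
    have hC : ∀ k : Fin l.length, BConnB tl hd {a | a ∈ l} S (hd (l.get k)) :=
      goodOrder_conn_aux hgood _ (fun k => Or.inl (l.get_mem _))
    -- the arcs of l are exactly P
    have hlset : {a | a ∈ l} = P := by
      apply Set.Subset.antisymm (fun a ha => hsub a ha)
      by_contra hne
      replace hne := Set.not_subset.mp hne
      obtain ⟨a, haP, hal⟩ := hne
      refine hmin {b | b ∈ l} ⟨fun b hb => hsub b hb, fun h => hal (h haP)⟩ ?_
      intro t ht
      rcases hB t (hconn t ht) with h | ⟨b, hb, hbt⟩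
      · exact .base h
      · obtain ⟨k, hk⟩ := List.mem_iff_get.mp hb
        rw [← hbt, ← hk]; exact hC k
    -- connectivity of all of S ∪ heads in P minus a removable arc
    have hconnT_minus : ∀ (Q : Set A), Q ⊆ P →
        (∀ k : Fin l.length, l.get k ∈ Q ∨ hd (l.get k) ∈ S ∨
          ∃ j : Fin l.length, j < k ∧ hd (l.get j) = hd (l.get k)) →
        ∀ t ∈ T, BConnB tl hd Q S t := by
      intro Q hQP hhyp t ht
      rcases hB t (hconn t ht) with h | ⟨b, hb, hbt⟩
      · exact .base h
      · obtain ⟨k, hk⟩ := List.mem_iff_get.mp hb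
        rw [← hbt, ← hk]; exact goodOrder_conn_aux hgood Q hhyp k
    -- no arc has its head in S
    have hheadS : ∀ a ∈ P, hd a ∉ S := by
      intro a ha haS
      refine hmin (P \ {a}) (Set.sdiff_singleton_ssubset.mpr ha) ?_
      intro t ht
      exact bconn_remove_headS haS (hconn t ht)
    -- at most one arc per head
    have huniq : ∀ a ∈ P, ∀ b ∈ P, hd a = hd b → a = b := by
      have key : ∀ i j : Fin l.length, i < j → hd (l.get i) = hd (l.get j) → False := by
        intro i j hij hheads
        set b := l.get j with hbdef
        have hbP : b ∈ P := hlset ▸ (l.get_mem _)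
        refine hmin ({a | a ∈ l} \ {b}) ?_ ?_
        · rw [hlset]; exact Set.sdiff_singleton_ssubset.mpr hbP
        · refine hconnT_minus _ (fun c hc => hlset ▸ hc.1) ?_
          intro k
          by_cases hk : l.get k = b
          · have : k = j := hgetinj hk
            subst this
            exact Or.inr (Or.inr ⟨i, hij, hheads⟩)
          · exact Or.inl ⟨l.get_mem _, hk⟩
      intro a ha b hb hab
      obtain ⟨i, hi⟩ := List.mem_iff_get.mp (show a ∈ l by rw [← hlset] at ha; exact ha)
      obtain ⟨j, hj⟩ := List.mem_iff_get.mp (show b ∈ l by rw [← hlset] at hb; exact hb)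
      rcases lt_trichotomy i j with h | h | h
      · exact absurd (key i j h (by rw [hi, hj]; exact hab)) not_false
      · rw [← hi, ← hj, h]
      · exact absurd (key j i h (by rw [hi, hj]; exact hab.symm)) not_false
    -- at least one arc per head for relevant vertices outside S
    have hexists : ∀ v ∈ dverts tl hd P ∪ T, v ∉ S → ∃ a ∈ P, hd a = v := by
      rintro v (⟨a, ha, hcase⟩ | hvT) hvS
      · rcases hcase with h | rfl
        · -- v is in the tail of a ∈ P = arcs of l
          obtain ⟨i, hi⟩ := List.mem_iff_get.mp (show a ∈ l by rw [← hlset] at ha; exact ha)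
          rcases hgood i (by rw [hi]; exact h) with hS | ⟨j, hj, rfl⟩
          · exact absurd hS hvS
          · exact ⟨l.get j, hlset ▸ (l.get_mem _), rfl⟩
        · exact ⟨a, ha, rfl⟩
      · obtain ⟨a, ha, hav, -⟩ := bconn_elim (hconn v hvT) hvS
        exact ⟨a, ha, hav⟩
    refine ⟨⟨l, hnd, hlset, hgood⟩, ?_, ?_⟩
    · intro v hv
      constructor
      · intro hvS
        rw [Set.ncard_eq_zero (hfinsep v)]
        ext a
        simp only [Set.mem_setOf_eq, Set.mem_empty_iff_false, iff_false, not_and]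
        intro ha hav
        exact hheadS a ha (hav ▸ hvS)
      · intro hvS
        rw [Set.ncard_eq_one]
        obtain ⟨a, ha, hav⟩ := hexists v hv hvS
        refine ⟨a, ?_⟩
        ext b
        simp only [Set.mem_setOf_eq, Set.mem_singleton_iff]
        constructor
        · rintro ⟨hb, hbv⟩
          exact huniq b hb a ha (hbv.trans hav.symm)
        · rintro rfl
          exact ⟨ha, hav⟩
    · rintro v ⟨a, ha, hcase⟩ hvTS
      rcases hcase with h | rfl
      · exact ⟨a, ha, h⟩
      · by_contra hno
        push_neg at hno
        have haT : hd a ∉ T := fun h => hvTS (Or.inl h)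
        refine hmin (P \ {a}) (Set.sdiff_singleton_ssubset.mpr ha) ?_
        intro t ht
        exact bconn_remove_unused hno (hconn t ht) (fun h => haT (h ▸ ht))
  · rintro ⟨⟨l, hnd, hlset, hgood⟩, hcount, htail⟩
    have hgetinj : Function.Injective l.get := List.nodup_iff_injective_get.mp hnd
    have hmemP : ∀ a ∈ l, a ∈ P := fun a ha => hlset ▸ ha
    have hmemP' : ∀ a ∈ P, a ∈ l := fun a ha => by rw [← hlset] at ha; exact ha
    -- no arc has its head in S
    have hheadS : ∀ a ∈ P, hd a ∉ S := by
      intro a ha haS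
      have h0 := (hcount (hd a) (Or.inl ⟨a, ha, Or.inr rfl⟩)).1 haS
      rw [Set.ncard_eq_zero (hfinsep _)] at h0
      have : a ∈ ({b ∈ P | hd b = hd a} : Set A) := ⟨ha, rfl⟩
      rw [h0] at this
      exact this
    -- uniqueness of the arc with a given head
    have huniq : ∀ a ∈ P, ∀ b ∈ P, hd a = hd b → a = b := by
      intro a ha b hb hab
      have h1 := (hcount (hd a) (Or.inl ⟨a, ha, Or.inr rfl⟩)).2 (hheadS a ha)
      rw [Set.ncard_eq_one] at h1
      obtain ⟨c, hc⟩ := h1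
      have ha' : a ∈ ({x ∈ P | hd x = hd a} : Set A) := ⟨ha, rfl⟩
      have hb' : b ∈ ({x ∈ P | hd x = hd a} : Set A) := ⟨hb, hab.symm⟩
      rw [hc] at ha' hb'
      rw [ha', hb']
    -- connectivity of heads in P
    have hC : ∀ k : Fin l.length, BConnB tl hd P S (hd (l.get k)) := by
      intro k
      have := goodOrder_conn_aux hgood {a | a ∈ l} (fun k => Or.inl (l.get_mem _)) k
      rwa [hlset] at this
    have hconnT : ∀ t ∈ T, BConnB tl hd P S t := by
      intro t ht
      by_cases htS : t ∈ S
      · exact .base htS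
      · have h1 := (hcount t (Or.inr ht)).2 htS
        rw [Set.ncard_eq_one] at h1
        obtain ⟨a, hc⟩ := h1
        have ha : a ∈ ({x ∈ P | hd x = t} : Set A) := hc ▸ rfl
        obtain ⟨k, hk⟩ := List.mem_iff_get.mp (hmemP' a ha.1)
        exact ha.2 ▸ hk ▸ hC k
    refine ⟨hPA, hconnT, ?_⟩
    rintro Q hQP hQconn
    obtain ⟨b, hbP, hbQ⟩ := Set.exists_of_ssubset hQP
    set P' : Set A := P \ {b} with hP'def
    have hQP' : Q ⊆ P' := fun q hq => ⟨hQP.1 hq, fun h => hbQ (h ▸ hq)⟩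
    have hconnT' : ∀ t ∈ T, BConnB tl hd P' S t :=
      fun t ht => bconn_mono hQP' (hQconn t ht)
    -- any arc of P whose head is not connected in P' yields a later such arc
    have key : ∀ n : ℕ, ∀ i : Fin l.length, l.length - i.val ≤ n →
        ¬ BConnB tl hd P' S (hd (l.get i)) → False := by
      intro n
      induction n with
      | zero => intro i hi _; have := i.isLt; omega
      | succ n ih =>
        intro i hi hnc
        set a := l.get i with hadef
        have haP : a ∈ P := hmemP a (l.get_mem _)
        have hvS : hd a ∉ S := fun h => hnc (.base h)
        have hvT : hd a ∉ T := fun h => hnc (hconnT' _ h)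
        have hvd : hd a ∈ dverts tl hd P := ⟨a, haP, Or.inr rfl⟩
        obtain ⟨a', ha'P, ha'tl⟩ := htail (hd a) hvd (by
          rintro (h | h); exacts [hvT h, hvS h])
        obtain ⟨i', hi'⟩ := List.mem_iff_get.mp (hmemP' a' ha'P)
        have hlt : i < i' := by
          rcases hgood i' (by rw [hi']; exact ha'tl) with h | ⟨j, hj, hjh⟩
          · exact absurd h hvS
          · have : l.get j = a :=
              huniq _ (hmemP _ (l.get_mem _)) _ haP hjh.symm
            have : j = i := hgetinj this
            exact this ▸ hj
        have hnc' : ¬ BConnB tl hd P' S (hd (l.get i')) := by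
          intro hc
          have hS' : hd (l.get i') ∉ S := hheadS _ (hmemP _ (l.get_mem _))
          obtain ⟨c, hcP', hch, hctails⟩ := bconn_elim hc hS'
          have : c = l.get i' := huniq c hcP'.1 _ (hmemP _ (l.get_mem _)) hch
          subst this
          exact hnc (hctails _ (hi' ▸ ha'tl))
        have hlt' : i.val < i'.val := hlt
        exact ih i' (by omega) hnc'
    obtain ⟨ib, hib⟩ := List.mem_iff_get.mp (hmemP' b hbP)
    refine key l.length ib (by omega) ?_
    intro hc
    have hS' : hd (l.get ib) ∉ S := hheadS _ (hmemP _ (l.get_mem _))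
    obtain ⟨c, hcP', hch, -⟩ := bconn_elim hc hS'
    have : c = l.get ib := huniq c hcP'.1 _ (hmemP _ (l.get_mem _)) hch
    exact hcP'.2 (by rw [this, hib]; rfl)
end
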